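/- Let d be a positive integer, B the open unit ball of ℂ^d, λ₁, …, λₙ distinct points of B, and z₁, …, zₙ ∈ ℂ. If the n×n matrix whose (i,j) entry is (1 − zᵢ·conj(zⱼ))·(1 − ⟨λᵢ,λⱼ⟩)^{-1} is positive semidefinite, then there exists a holomorphic function φ : B → ℂ with sup_{w∈B} |φ(w)| ≤ 1 and φ(λᵢ) = zᵢ for each i. -/

import Mathlib

open Complex Metric
open scoped ComplexOrder InnerProductSpace Matrix

/-!
The transpose of the Pick matrix is a Gram matrix `(⟪vᵢ, vⱼ⟫)`, and positivity then says exactly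
that the vectors `(1, λᵢ ⊗ vᵢ)` and `(zᵢ, vᵢ)` have the same Gram matrix. The lurking isometry
argument gives a contraction `T = [[a, B], [C, D]]` sending the first family to the second. The
transfer function `φ(w) = a + B (w ⊗ (1 - D (w ⊗ ·))⁻¹ C)` of this colligation is holomorphic on
the ball, bounded by `1` because `T` is a contraction and `‖w ⊗ x‖ = ‖w‖ ‖x‖ ≤ ‖x‖`, and it
interpolates because `vᵢ` solves the state equation `x = C + D (λᵢ ⊗ x)`.
-/

theorem Matrix.PosSemidef.exists_eq_gram {𝕜 ι : Type*} [RCLike 𝕜] [Fintype ι]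
    {A : Matrix ι ι 𝕜} (hA : A.PosSemidef) : ∃ v : ι → EuclideanSpace 𝕜 ι, A = gram 𝕜 v := by
  classical
  obtain ⟨B, rfl⟩ : ∃ B, A = Bᴴ * B := by
    open scoped MatrixOrder in exact CStarAlgebra.nonneg_iff_eq_star_mul_self.mp hA.nonneg
  refine ⟨fun i => WithLp.toLp 2 (fun s => B s i), ?_⟩
  ext i j
  simp [gram_apply, mul_apply, PiLp.inner_apply, mul_comm]

section LurkingIsometry

variable {𝕜 ι E F : Type*} [RCLike 𝕜] [Fintype ι]
  [NormedAddCommGroup E] [InnerProductSpace 𝕜 E]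
  [NormedAddCommGroup F] [InnerProductSpace 𝕜 F]

theorem norm_linearCombination_eq_of_inner_eq {x : ι → E} {y : ι → F}
    (h : ∀ i j, ⟪x i, x j⟫_𝕜 = ⟪y i, y j⟫_𝕜) (c : ι → 𝕜) :
    ‖Fintype.linearCombination 𝕜 y c‖ = ‖Fintype.linearCombination 𝕜 x c‖ := by
  have hinner : ⟪Fintype.linearCombination 𝕜 y c, Fintype.linearCombination 𝕜 y c⟫_𝕜 =
      ⟪Fintype.linearCombination 𝕜 x c, Fintype.linearCombination 𝕜 x c⟫_𝕜 := by
    simp only [Fintype.linearCombination_apply, sum_inner, inner_sum, inner_smul_left,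
      inner_smul_right, h]
  rw [inner_self_eq_norm_sq_to_K, inner_self_eq_norm_sq_to_K] at hinner
  exact (pow_left_inj₀ (norm_nonneg _) (norm_nonneg _) two_ne_zero).1 (by exact_mod_cast hinner)

theorem exists_contraction_of_inner_eq (x : ι → E) (y : ι → F)
    (h : ∀ i j, ⟪x i, x j⟫_𝕜 = ⟪y i, y j⟫_𝕜) :
    ∃ T : E →L[𝕜] F, ‖T‖ ≤ 1 ∧ ∀ i, T (x i) = y i := by
  classical
  let L := Fintype.linearCombination 𝕜 x
  let L' := Fintype.linearCombination 𝕜 y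
  have hnorm : ∀ c, ‖L' c‖ = ‖L c‖ := norm_linearCombination_eq_of_inner_eq h
  have hker : LinearMap.ker L ≤ LinearMap.ker L' := fun c hc => by
    rw [LinearMap.mem_ker, ← norm_eq_zero, hnorm, norm_eq_zero]
    exact hc
  -- the isometry `L c ↦ L' c` on the span of the `x i`, extended by zero on its complement
  let T₀ : LinearMap.range L →ₗ[𝕜] F :=
    (LinearMap.ker L).liftQ L' hker ∘ₗ L.quotKerEquivRange.symm.toLinearMap
  have hT₀ : ∀ c, T₀ ⟨L c, LinearMap.mem_range_self L c⟩ = L' c := fun c => by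
    simp [T₀, L.quotKerEquivRange_symm_apply_image c]
  have hT₀_norm : ∀ u, ‖T₀ u‖ = ‖u‖ := by
    rintro ⟨-, c, rfl⟩
    rw [hT₀, hnorm]
    rfl
  let P := (LinearMap.range L).orthogonalProjectionOnto
  have hbound : ∀ u, ‖(T₀ ∘ₗ P.toLinearMap) u‖ ≤ 1 * ‖u‖ := fun u => by
    rw [one_mul]
    exact (hT₀_norm _).trans_le ((LinearMap.range L).norm_orthogonalProjectionOnto_apply_le u)
  refine ⟨(T₀ ∘ₗ P.toLinearMap).mkContinuous 1 hbound,
    LinearMap.mkContinuous_norm_le _ zero_le_one hbound, fun i => ?_⟩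
  have hx : x i = L (Pi.single i 1) := by simp [L]
  have hy : y i = L' (Pi.single i 1) := by simp [L']
  have hP : P (x i) = ⟨L (Pi.single i 1), LinearMap.mem_range_self L _⟩ := by
    rw [hx]
    exact Submodule.orthogonalProjectionOnto_mem_subspace_eq_self ⟨_, _⟩
  simp [hP, hT₀, hy]

end LurkingIsometry

section CoordSMul

variable {𝕜 κ H : Type*} [RCLike 𝕜] [Fintype κ] [NormedAddCommGroup H] [InnerProductSpace 𝕜 H]

theorem inner_toLp_smul (w w' : EuclideanSpace 𝕜 κ) (x x' : H) :
    ⟪(WithLp.toLp 2 fun k => w k • x : PiLp 2 fun _ : κ => H),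
        WithLp.toLp 2 fun k => w' k • x'⟫_𝕜 = ⟪w, w'⟫_𝕜 * ⟪x, x'⟫_𝕜 := by
  simp [PiLp.inner_apply, inner_smul_left, inner_smul_right, Finset.mul_sum, mul_comm,
    mul_left_comm]

theorem norm_toLp_smul (w : EuclideanSpace 𝕜 κ) (x : H) :
    ‖(WithLp.toLp 2 fun k => w k • x : PiLp 2 fun _ : κ => H)‖ = ‖w‖ * ‖x‖ := by
  have h := inner_toLp_smul w w x x
  rw [inner_self_eq_norm_sq_to_K, inner_self_eq_norm_sq_to_K, inner_self_eq_norm_sq_to_K,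
    ← mul_pow] at h
  exact (pow_left_inj₀ (norm_nonneg _) (by positivity) two_ne_zero).1 (by exact_mod_cast h)

variable (𝕜 κ H) in
/-- `w ⊗ x`, under the identification `𝕜^κ ⊗ H ≃ H^κ`. -/
noncomputable def coordSMul : EuclideanSpace 𝕜 κ →L[𝕜] H →L[𝕜] PiLp 2 fun _ : κ => H :=
  LinearMap.mkContinuous₂
    (LinearMap.mk₂ 𝕜 (fun w x => WithLp.toLp 2 fun k => w k • x)
      (fun _ _ _ => by ext; simp [add_smul]) (fun _ _ _ => by ext; simp [mul_smul])
      (fun _ _ _ => by ext; simp) (fun _ _ _ => by ext; simp [smul_smul, mul_comm]))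
    1 (fun w x => by simp [norm_toLp_smul])

@[simp]
theorem coordSMul_apply (w : EuclideanSpace 𝕜 κ) (x : H) :
    coordSMul 𝕜 κ H w x = WithLp.toLp 2 fun k => w k • x := rfl

theorem norm_coordSMul_le_one : ‖coordSMul 𝕜 κ H‖ ≤ 1 :=
  LinearMap.mkContinuous₂_norm_le _ zero_le_one _

theorem inner_toLp_one_coordSMul_eq {w w' : EuclideanSpace 𝕜 κ} {x x' : H} {z z' : 𝕜}
    (h : ⟪x, x'⟫_𝕜 * (1 - ⟪w, w'⟫_𝕜) = 1 - starRingEnd 𝕜 z * z') :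
    ⟪(WithLp.toLp 2 (1, coordSMul 𝕜 κ H w x) : WithLp 2 (𝕜 × _)),
        WithLp.toLp 2 (1, coordSMul 𝕜 κ H w' x')⟫_𝕜 =
      ⟪(WithLp.toLp 2 (z, x) : WithLp 2 (𝕜 × H)), WithLp.toLp 2 (z', x')⟫_𝕜 := by
  simp only [WithLp.prod_inner_apply, coordSMul_apply, inner_toLp_smul]
  simp
  linear_combination -h

end CoordSMul

theorem ContinuousLinearMap.eq_inverse_apply_iff {𝕜 H : Type*} [RCLike 𝕜]
    [NormedAddCommGroup H] [NormedSpace 𝕜 H] {u : H →L[𝕜] H} (hu : IsUnit u) {x y : H} :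
    x = Ring.inverse u y ↔ u x = y := by
  constructor
  · rintro rfl
    rw [← mul_apply_eq_comp, Ring.mul_inverse_cancel u hu, one_apply_eq_self]
  · rintro rfl
    rw [← mul_apply_eq_comp, Ring.inverse_mul_cancel u hu, one_apply_eq_self]

theorem one_sub_inner_ne_zero {𝕜 E : Type*} [RCLike 𝕜] [NormedAddCommGroup E]
    [InnerProductSpace 𝕜 E] {x y : E} (hx : ‖x‖ < 1) (hy : ‖y‖ < 1) : 1 - ⟪x, y⟫_𝕜 ≠ 0 := by
  refine sub_ne_zero.2 fun h => ?_
  have := norm_inner_le_norm (𝕜 := 𝕜) x y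
  rw [← h, norm_one] at this
  nlinarith [norm_nonneg x, norm_nonneg y]

namespace Colligation

variable {𝕜 E H K : Type*} [RCLike 𝕜] [NormedAddCommGroup E] [NormedSpace 𝕜 E]
  [NormedAddCommGroup H] [NormedSpace 𝕜 H] [NormedAddCommGroup K] [NormedSpace 𝕜 K]
  (T : WithLp 2 (𝕜 × K) →L[𝕜] WithLp 2 (𝕜 × H)) (μ : E →L[𝕜] H →L[𝕜] K)

/-- `D ∘ μ w`, where `D : K → H` is the lower right block of `T`. -/
noncomputable def feedback (w : E) : H →L[𝕜] H :=
  (WithLp.sndL 2 𝕜 𝕜 H ∘L T ∘L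
    (WithLp.prodContinuousLinearEquiv 2 𝕜 𝕜 K).symm.toContinuousLinearMap ∘L
      ContinuousLinearMap.inr 𝕜 𝕜 K) ∘L μ w

/-- The solution `x` of `x = C + D (μ w x)`, where `C = (T (1, 0)).snd`. -/
noncomputable def state (w : E) : H :=
  Ring.inverse (1 - feedback T μ w) (T (WithLp.toLp 2 (1, 0))).snd

noncomputable def transfer (w : E) : 𝕜 :=
  (T (WithLp.toLp 2 (1, μ w (state T μ w)))).fst

theorem snd_apply_toLp_one (w : E) (x : H) :
    (T (WithLp.toLp 2 (1, μ w x))).snd = (T (WithLp.toLp 2 (1, 0))).snd + feedback T μ w x := by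
  have h : (WithLp.toLp 2 (1, μ w x) : WithLp 2 (𝕜 × K)) =
      WithLp.toLp 2 (1, 0) + WithLp.toLp 2 (0, μ w x) := by
    rw [← WithLp.toLp_add, Prod.mk_add_mk, add_zero, zero_add]
  rw [h, map_add, WithLp.add_snd]
  rfl

variable {T μ}

theorem norm_feedback_le (hT : ‖T‖ ≤ 1) (hμ : ‖μ‖ ≤ 1) (w : E) :
    ‖feedback T μ w‖ ≤ ‖w‖ := by
  refine ContinuousLinearMap.opNorm_le_bound _ (norm_nonneg w) fun x => ?_
  calc ‖feedback T μ w x‖ = ‖(T (WithLp.toLp 2 (0, μ w x))).snd‖ := rfl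
    _ ≤ ‖T (WithLp.toLp 2 (0, μ w x))‖ := WithLp.norm_snd_le _ _
    _ ≤ ‖(WithLp.toLp 2 (0, μ w x) : WithLp 2 (𝕜 × K))‖ :=
      (T.le_of_opNorm_le hT _).trans_eq (one_mul _)
    _ = ‖μ w x‖ := by simp
    _ ≤ ‖w‖ * ‖x‖ := by simpa using μ.le_of_opNorm₂_le_of_le hμ le_rfl le_rfl

theorem isUnit_one_sub_feedback [CompleteSpace H] (hT : ‖T‖ ≤ 1) (hμ : ‖μ‖ ≤ 1) {w : E}
    (hw : ‖w‖ < 1) : IsUnit (1 - feedback T μ w) :=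
  ⟨Units.oneSub _ ((norm_feedback_le hT hμ w).trans_lt hw), rfl⟩

theorem eq_state_iff [CompleteSpace H] (hT : ‖T‖ ≤ 1) (hμ : ‖μ‖ ≤ 1) {w : E} (hw : ‖w‖ < 1)
    (x : H) : x = state T μ w ↔ (T (WithLp.toLp 2 (1, μ w x))).snd = x := by
  rw [state, ContinuousLinearMap.eq_inverse_apply_iff (isUnit_one_sub_feedback hT hμ hw),
    snd_apply_toLp_one, sub_apply, one_apply_eq_self, sub_eq_iff_eq_add, eq_comm]

theorem apply_toLp_state [CompleteSpace H] (hT : ‖T‖ ≤ 1) (hμ : ‖μ‖ ≤ 1) {w : E}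
    (hw : ‖w‖ < 1) :
    T (WithLp.toLp 2 (1, μ w (state T μ w))) = WithLp.toLp 2 (transfer T μ w, state T μ w) :=
  (WithLp.ext_iff 2).2 (Prod.ext rfl ((eq_state_iff hT hμ hw _).1 rfl))

theorem transfer_eq_of_apply_eq [CompleteSpace H] (hT : ‖T‖ ≤ 1) (hμ : ‖μ‖ ≤ 1) {w : E}
    (hw : ‖w‖ < 1) {x : H} {z : 𝕜} (h : T (WithLp.toLp 2 (1, μ w x)) = WithLp.toLp 2 (z, x)) :
    transfer T μ w = z := by
  obtain rfl := (eq_state_iff hT hμ hw x).2 (congrArg WithLp.snd h)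
  exact congrArg WithLp.fst h

theorem norm_transfer_le_one [CompleteSpace H] (hT : ‖T‖ ≤ 1) (hμ : ‖μ‖ ≤ 1) {w : E}
    (hw : ‖w‖ < 1) : ‖transfer T μ w‖ ≤ 1 := by
  set x := state T μ w
  set u : WithLp 2 (𝕜 × K) := WithLp.toLp 2 (1, μ w x)
  have hsq : ‖transfer T μ w‖ ^ 2 + ‖x‖ ^ 2 ≤ 1 + ‖x‖ ^ 2 := calc
    _ = ‖T u‖ ^ 2 := by rw [apply_toLp_state hT hμ hw, WithLp.prod_norm_sq_eq_of_L2]; rfl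
    _ ≤ ‖u‖ ^ 2 := by gcongr; exact (T.le_of_opNorm_le hT u).trans_eq (one_mul _)
    _ = 1 + ‖μ w x‖ ^ 2 := by simp [u, WithLp.prod_norm_sq_eq_of_L2]
    _ ≤ 1 + (‖w‖ * ‖x‖) ^ 2 := by
      gcongr
      simpa using μ.le_of_opNorm₂_le_of_le hμ le_rfl le_rfl
    _ ≤ 1 + ‖x‖ ^ 2 := by gcongr; exact mul_le_of_le_one_left (norm_nonneg x) hw.le
  exact (sq_le_one_iff₀ (norm_nonneg _)).1 (by linarith)

theorem differentiableOn_transfer [CompleteSpace H] (hT : ‖T‖ ≤ 1) (hμ : ‖μ‖ ≤ 1) :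
    DifferentiableOn 𝕜 (transfer T μ) (ball 0 1) := by
  intro w hw
  rw [mem_ball_zero_iff] at hw
  have hfeedback : DifferentiableAt 𝕜 (feedback T μ) w :=
    (differentiableAt_const _).clm_comp μ.differentiableAt
  have hstate : DifferentiableAt 𝕜 (state T μ) w :=
    (((differentiableAt_const 1).sub hfeedback).inverse
      (isUnit_one_sub_feedback hT hμ hw)).clm_apply (differentiableAt_const _)
  have hinput : DifferentiableAt 𝕜
      (fun w => (WithLp.toLp 2 (1, μ w (state T μ w)) : WithLp 2 (𝕜 × K))) w :=
    (WithLp.prodContinuousLinearEquiv 2 𝕜 𝕜 K).symm.differentiableAt.comp w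
      ((differentiableAt_const 1).prodMk (μ.differentiableAt.clm_apply hstate))
  exact ((WithLp.fstL 2 𝕜 𝕜 H ∘L T).differentiableAt.comp w hinput).differentiableWithinAt

end Colligation

theorem stmt8 (d n : ℕ)
    (lam : Fin n → EuclideanSpace ℂ (Fin d))
    (hmem : ∀ i, lam i ∈ ball (0 : EuclideanSpace ℂ (Fin d)) 1)
    (z : Fin n → ℂ)
    (hpos : (Matrix.of fun i j : Fin n =>
      (1 - z i * (starRingEnd ℂ) (z j)) *
        (1 - ∑ k, lam i k * (starRingEnd ℂ) (lam j k))⁻¹).PosSemidef) :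
    ∃ φ : EuclideanSpace ℂ (Fin d) → ℂ,
      DifferentiableOn ℂ φ (ball (0 : EuclideanSpace ℂ (Fin d)) 1) ∧
      (∀ w ∈ ball (0 : EuclideanSpace ℂ (Fin d)) 1, ‖φ w‖ ≤ 1) ∧
      ∀ i, φ (lam i) = z i := by
  have hlam : ∀ i, ‖lam i‖ < 1 := fun i => mem_ball_zero_iff.mp (hmem i)
  obtain ⟨v, hv⟩ := hpos.transpose.exists_eq_gram
  have hpick : ∀ i j,
      ⟪v i, v j⟫_ℂ * (1 - ⟪lam i, lam j⟫_ℂ) = 1 - starRingEnd ℂ (z i) * z j := by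
    intro i j
    have hkernel : ∑ k, lam j k * starRingEnd ℂ (lam i k) = ⟪lam i, lam j⟫_ℂ := by
      simp [PiLp.inner_apply]
    have hij := congrFun (congrFun hv i) j
    rw [Matrix.transpose_apply, Matrix.of_apply, hkernel, Matrix.gram_apply] at hij
    rw [← hij, inv_mul_cancel_right₀ (one_sub_inner_ne_zero (hlam i) (hlam j))]
    ring
  let μ := coordSMul ℂ (Fin d) (EuclideanSpace ℂ (Fin n))
  obtain ⟨T, hT, hTv⟩ := exists_contraction_of_inner_eq
    (fun i => (WithLp.toLp 2 (1, μ (lam i) (v i)) : WithLp 2 (ℂ × _)))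
    (fun i => (WithLp.toLp 2 (z i, v i) : WithLp 2 (ℂ × _)))
    (fun i j => inner_toLp_one_coordSMul_eq (hpick i j))
  exact ⟨Colligation.transfer T μ,
    Colligation.differentiableOn_transfer hT norm_coordSMul_le_one,
    fun w hw => Colligation.norm_transfer_le_one hT norm_coordSMul_le_one (mem_ball_zero_iff.mp hw),
    fun i => Colligation.transfer_eq_of_apply_eq hT norm_coordSMul_le_one (hlam i) (hTv i)⟩
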